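/- arXiv:1705.01000 — 2 statements merged into one kernel-verified Lean document; each statement's English description precedes it below -/
import Mathlib

section
/- A Boolean σ-algebra B is uniformly weakly distributive if and only if B has a tight G_δ fragmentation. -/
universe u

/-- A Boolean σ-algebra: a Boolean algebra in which every countable subset
(equivalently, every `ℕ`-indexed sequence) has a supremum. -/
class BooleanSigmaAlgebra (α : Type u) extends BooleanAlgebra α where
  seqSup : (ℕ → α) → α
  le_seqSup : ∀ (f : ℕ → α) (n : ℕ), f n ≤ seqSup f
  seqSup_le : ∀ (f : ℕ → α) (b : α), (∀ n, f n ≤ b) → seqSup f ≤ b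

namespace BooleanSigmaAlgebra

variable {α : Type u} [BooleanSigmaAlgebra α]

/-- Countable infimum, derived from countable suprema via complements. -/
def seqInf (f : ℕ → α) : α := (seqSup fun n => (f n)ᶜ)ᶜ

/-- `limsup_n a_n = ⋀_n ⋁_{k ≥ n} a_k`. -/
def blimsup (f : ℕ → α) : α := seqInf fun n => seqSup fun k => f (n + k)

/-- `liminf_n a_n = ⋁_n ⋀_{k ≥ n} a_k`. -/
def bliminf (f : ℕ → α) : α := seqSup fun n => seqInf fun k => f (n + k)

/-- The sequence `a_n` converges to `0`, i.e. `limsup_n a_n = 0` (which is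
equivalent to `lim_n a_n = 0`). -/
def TendstoBot (f : ℕ → α) : Prop := blimsup f = ⊥

/-- The sequence `a_n` converges to `1`, i.e. `liminf_n a_n = 1` (which is
equivalent to `lim_n a_n = 1`). -/
def TendstoTop (f : ℕ → α) : Prop := bliminf f = ⊤

/-- An antichain: a set of nonzero pairwise disjoint elements. -/
def IsAC (A : Set α) : Prop := ⊥ ∉ A ∧ A.Pairwise fun a b => a ⊓ b = ⊥

/-- A maximal antichain: an antichain such that every nonzero element meets
some member of it. -/
def IsMaxAC (W : Set α) : Prop := IsAC W ∧ ∀ b : α, b ≠ ⊥ → ∃ w ∈ W, w ⊓ b ≠ ⊥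

/-- A countable maximal antichain. -/
def IsCMA (W : Set α) : Prop := W.Countable ∧ IsMaxAC W

/-- `B` is weakly distributive: every sequence `{W_n}` of countable maximal
antichains admits finite subsets `E_n ⊆ W_n` with `lim_n ⋁E_n = 1`. -/
def WeaklyDistributive (α : Type u) [BooleanSigmaAlgebra α] : Prop :=
  ∀ W : ℕ → Set α, (∀ n, IsCMA (W n)) →
    ∃ E : ℕ → Finset α, (∀ n, ↑(E n) ⊆ W n) ∧ TendstoTop fun n => (E n).sup id

/-- `B` is uniformly weakly distributive: there are functions `F_n` assigning
to each countable maximal antichain `W` a finite subset `F_n(W) ⊆ W` such that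
for every sequence `{W_n}` of countable maximal antichains,
`lim_n ⋁F_n(W_n) = 1`. -/
def UniformlyWeaklyDistributive (α : Type u) [BooleanSigmaAlgebra α] : Prop :=
  ∃ F : ℕ → Set α → Finset α,
    (∀ (n : ℕ) (W : Set α), IsCMA W → ↑(F n W) ⊆ W) ∧
    ∀ W : ℕ → Set α, (∀ n, IsCMA (W n)) → TendstoTop fun n => (F n (W n)).sup id

/-- `B` is uniformly concentrated: there is a function `F` assigning to each
finite antichain `A` an element `F(A) ∈ A` such that for every sequence `{A_n}`
of finite antichains with `|A_n| ≥ 2^n`, `lim_n F(A_n) = 0`. -/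
def UniformlyConcentrated (α : Type u) [BooleanSigmaAlgebra α] : Prop :=
  ∃ F : Finset α → α,
    (∀ A : Finset α, A.Nonempty → IsAC (↑A : Set α) → F A ∈ A) ∧
    ∀ A : ℕ → Finset α, (∀ n, IsAC (↑(A n) : Set α) ∧ 2 ^ n ≤ (A n).card) →
      TendstoBot fun n => F (A n)

/-- `B` is concentrated: for every sequence `{A_n}` of finite antichains with
`|A_n| ≥ 2^n` there are `a_n ∈ A_n` with `lim_n a_n = 0`. -/
def Concentrated (α : Type u) [BooleanSigmaAlgebra α] : Prop :=
  ∀ A : ℕ → Finset α, (∀ n, IsAC (↑(A n) : Set α) ∧ 2 ^ n ≤ (A n).card) →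
    ∃ a : ℕ → α, (∀ n, a n ∈ A n) ∧ TendstoBot a

/-- A strictly positive finitely additive (probability) measure on `B`. -/
structure IsFinAddMeasure (m : α → ℝ) : Prop where
  map_bot : m ⊥ = 0
  pos : ∀ a : α, a ≠ ⊥ → 0 < m a
  map_top : m ⊤ = 1
  mono : ∀ a b : α, a ≤ b → m a ≤ m b
  add : ∀ a b : α, a ⊓ b = ⊥ → m (a ⊔ b) = m a + m b

/-- A (strictly positive, σ-additive, probability) measure on `B`. -/
structure IsMeasure (m : α → ℝ) extends IsFinAddMeasure m : Prop where
  sigma_add : ∀ f : ℕ → α, (∀ i j : ℕ, i ≠ j → f i ⊓ f j = ⊥) →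
    HasSum (fun n => m (f n)) (m (seqSup f))

/-- A measure algebra: a Boolean σ-algebra carrying a measure. -/
def IsMeasureAlgebra (α : Type u) [BooleanSigmaAlgebra α] : Prop :=
  ∃ m : α → ℝ, IsMeasure m

/-- A fragmentation of `B`: an increasing sequence of upward closed subsets of
`B ∖ {0}` whose union is `B ∖ {0}`. -/
structure IsFragmentation (C : ℕ → Set α) : Prop where
  mono : ∀ n, C n ⊆ C (n + 1)
  not_bot : ∀ n, ⊥ ∉ C n
  upward : ∀ (n : ℕ) (a b : α), a ∈ C n → a ≤ b → b ∈ C n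
  covers : ∀ a : α, a ≠ ⊥ → ∃ n, a ∈ C n

/-- A fragmentation is tight if `a_n ∉ C_n` for all `n` implies `lim_n a_n = 0`. -/
def Tight (C : ℕ → Set α) : Prop :=
  ∀ a : ℕ → α, (∀ n, a n ∉ C n) → TendstoBot a

/-- A fragmentation is σ-bounded cc if for every `n` there is a bound `K_n` on
the size of antichains contained in `C_n`. -/
def SigmaBoundedCC (C : ℕ → Set α) : Prop :=
  ∀ n : ℕ, ∃ K : ℕ, ∀ A : Set α, A ⊆ C n → IsAC A → A.Finite ∧ A.ncard ≤ K

/-- A fragmentation is σ-finite cc if every antichain contained in some `C_n`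
is finite. -/
def SigmaFiniteCC (C : ℕ → Set α) : Prop :=
  ∀ n : ℕ, ∀ A : Set α, A ⊆ C n → IsAC A → A.Finite

/-- A fragmentation is `G_δ` if for every `n` no sequence of elements of `C_n`
converges to `0`. -/
def GDelta (C : ℕ → Set α) : Prop :=
  ∀ (n : ℕ) (a : ℕ → α), (∀ k, a k ∈ C n) → ¬ TendstoBot a

/-- A fragmentation is graded if `a ⊔ b ∈ C_n` implies `a ∈ C_{n+1}` or
`b ∈ C_{n+1}`. -/
def Graded (C : ℕ → Set α) : Prop :=
  ∀ (n : ℕ) (a b : α), a ⊔ b ∈ C n → a ∈ C (n + 1) ∨ b ∈ C (n + 1)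

end BooleanSigmaAlgebra

namespace BooleanSigmaAlgebra

variable {α : Type u} [BooleanSigmaAlgebra α]

lemma seqInf_le (f : ℕ → α) (n : ℕ) : seqInf f ≤ f n := by
  have h := le_seqSup (fun n => (f n)ᶜ) n
  calc seqInf f ≤ ((f n)ᶜ)ᶜ := compl_le_compl h
  _ = f n := compl_compl _

lemma le_seqInf (f : ℕ → α) (b : α) (h : ∀ n, b ≤ f n) : b ≤ seqInf f := by
  have : seqSup (fun n => (f n)ᶜ) ≤ bᶜ := seqSup_le _ _ fun n => compl_le_compl (h n)
  calc b = bᶜᶜ := (compl_compl b).symm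
  _ ≤ seqInf f := compl_le_compl this

lemma seqSup_mono {f g : ℕ → α} (h : ∀ n, f n ≤ g n) : seqSup f ≤ seqSup g :=
  seqSup_le _ _ fun n => (h n).trans (le_seqSup g n)

lemma seqInf_mono {f g : ℕ → α} (h : ∀ n, f n ≤ g n) : seqInf f ≤ seqInf g :=
  le_seqInf _ _ fun n => (seqInf_le f n).trans (h n)

lemma seqSup_compl (f : ℕ → α) : seqSup (fun n => (f n)ᶜ) = (seqInf f)ᶜ := by
  simp [seqInf]

lemma seqInf_compl (f : ℕ → α) : seqInf (fun n => (f n)ᶜ) = (seqSup f)ᶜ := by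
  simp only [seqInf, compl_compl]

lemma blimsup_compl (f : ℕ → α) : blimsup (fun n => (f n)ᶜ) = (bliminf f)ᶜ := by
  unfold blimsup bliminf
  have : ∀ n : ℕ, (seqSup fun k => (f (n+k))ᶜ) = (seqInf fun k => f (n+k))ᶜ :=
    fun n => seqSup_compl _
  rw [show (fun n => seqSup fun k => (f (n+k))ᶜ) = fun n => (seqInf fun k => f (n+k))ᶜ
      from funext this, seqInf_compl]

lemma blimsup_mono {f g : ℕ → α} (h : ∀ n, f n ≤ g n) : blimsup f ≤ blimsup g :=
  seqInf_mono fun n => seqSup_mono fun k => h (n+k)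

lemma le_blimsup_of_cofinal {f : ℕ → α} {b : α} (h : ∀ n, ∃ k, b ≤ f (n + k)) :
    b ≤ blimsup f :=
  le_seqInf _ _ fun n => by
    obtain ⟨k, hk⟩ := h n
    exact hk.trans (le_seqSup (fun k => f (n + k)) k)

lemma tendstoTop_iff_compl (f : ℕ → α) :
    TendstoTop f ↔ TendstoBot (fun n => (f n)ᶜ) := by
  unfold TendstoTop TendstoBot
  rw [blimsup_compl]
  constructor
  · intro h; rw [h, compl_top]
  · intro h; have := congrArg compl h; rwa [compl_compl, compl_bot] at this

lemma tendstoBot_mono {f g : ℕ → α} (h : ∀ n, f n ≤ g n) (hg : TendstoBot g) :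
    TendstoBot f :=
  le_bot_iff.mp (hg ▸ blimsup_mono h)

lemma disj_of_le_compl {x y u : α} (hx : x ≤ uᶜ) (hy : y ≤ u) : x ⊓ y = ⊥ :=
  le_bot_iff.mp ((inf_le_inf hx hy).trans (by simp))

lemma le_of_inf_compl_eq_bot {b c : α} (h : b ⊓ cᶜ = ⊥) : b ≤ c :=
  sdiff_eq_bot_iff.mp (by rw [sdiff_eq]; exact h)

lemma le_compl_of_inf_eq_bot {b c : α} (h : b ⊓ c = ⊥) : b ≤ cᶜ :=
  le_compl_iff_disjoint_right.mpr (disjoint_iff.mpr h)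

/-- there is always a countable maximal antichain -/
lemma exists_isCMA (α : Type u) [BooleanSigmaAlgebra α] : ∃ W : Set α, IsCMA W := by
  by_cases htriv : (⊤ : α) = ⊥
  · refine ⟨∅, Set.countable_empty, ⟨by simp, by simp⟩, fun b hb => absurd ?_ hb⟩
    rw [← le_bot_iff, ← htriv]; exact le_top
  · refine ⟨{⊤}, Set.countable_singleton _, ⟨?_, Set.pairwise_singleton _ _⟩,
      fun b hb => ⟨⊤, rfl, by simpa⟩⟩
    simp only [Set.mem_singleton_iff]
    exact fun h => htriv h.symm

section Tails
variable (a : ℕ → α)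

/-- tail suprema of a sequence -/
def tails (j : ℕ) : α := seqSup fun k => a (j + k)

lemma le_tails {j k : ℕ} (h : j ≤ k) : a k ≤ tails a j := by
  have : a (j + (k - j)) ≤ tails a j := le_seqSup (fun k => a (j + k)) (k - j)
  rwa [Nat.add_sub_cancel' h] at this

lemma tails_antitone : Antitone (tails a) := by
  refine antitone_nat_of_succ_le fun j => seqSup_le _ _ fun k => ?_
  have : a (j + 1 + k) = a (j + (1 + k)) := by ring_nf
  rw [this]; exact le_seqSup (fun k => a (j + k)) (1 + k)

lemma blimsup_eq_seqInf_tails : blimsup a = seqInf (tails a) := rfl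

/-- The canonical countable maximal antichain built from a sequence converging
to `⊥`: the nonzero elements among `(t 0)ᶜ` and `t j \ t (j+1)`. -/
def seqW : Set α :=
  {x | x ≠ ⊥ ∧ (x = (tails a 0)ᶜ ∨ ∃ j, x = tails a j ⊓ (tails a (j+1))ᶜ)}

lemma seqW_isCMA (ha : TendstoBot a) : IsCMA (seqW a) := by
  set t := tails a with ht
  constructor
  · -- countable
    apply Set.Countable.mono (s₁ := seqW a)
      (s₂ := insert ((t 0)ᶜ) (Set.range fun j => t j ⊓ (t (j+1))ᶜ))
    · rintro x ⟨-, h | ⟨j, rfl⟩⟩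
      · exact Set.mem_insert_iff.mpr (Or.inl h)
      · exact Set.mem_insert_iff.mpr (Or.inr ⟨j, rfl⟩)
    · exact (Set.countable_range _).insert _
  constructor
  · constructor
    · rintro ⟨h, -⟩; exact h rfl
    · rintro x ⟨hx0, hx⟩ y ⟨hy0, hy⟩ hxy
      rcases hx with hx | ⟨i, hx⟩ <;> rcases hy with hy | ⟨j, hy⟩
      · exact absurd (hx.trans hy.symm) hxy
      · subst hx; subst hy
        exact disj_of_le_compl le_rfl (inf_le_left.trans (tails_antitone a (Nat.zero_le j)))
      · subst hx; subst hy
        rw [inf_comm]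
        exact disj_of_le_compl le_rfl (inf_le_left.trans (tails_antitone a (Nat.zero_le i)))
      · subst hx; subst hy
        rcases lt_trichotomy i j with h | h | h
        · exact disj_of_le_compl (u := t (i+1)) inf_le_right
            (inf_le_left.trans (tails_antitone a h))
        · exact absurd (by rw [h]) hxy
        · rw [inf_comm]
          exact disj_of_le_compl (u := t (j+1)) inf_le_right
            (inf_le_left.trans (tails_antitone a h))
  · -- maximality
    intro b hb
    by_contra hno
    push_neg at hno
    have hmeet : ∀ x : α, (x = (t 0)ᶜ ∨ ∃ j, x = t j ⊓ (t (j+1))ᶜ) → x ⊓ b = ⊥ := by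
      intro x hx
      by_cases hx0 : x = ⊥
      · rw [hx0, bot_inf_eq]
      · exact hno x ⟨hx0, hx⟩
    have h0 : b ≤ t 0 := by
      have := hmeet ((t 0)ᶜ) (Or.inl rfl)
      rw [inf_comm] at this
      exact le_of_inf_compl_eq_bot this
    have hstep : ∀ j, b ≤ t j → b ≤ t (j + 1) := by
      intro j hj
      have hpj := hmeet (t j ⊓ (t (j+1))ᶜ) (Or.inr ⟨j, rfl⟩)
      have : b ⊓ (t (j+1))ᶜ = ⊥ := by
        have hle : b ⊓ (t (j+1))ᶜ ≤ (t j ⊓ (t (j+1))ᶜ) ⊓ b :=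
          le_inf (le_inf (inf_le_left.trans hj) inf_le_right) inf_le_left
        exact le_bot_iff.mp (hpj ▸ hle)
      exact le_of_inf_compl_eq_bot this
    have hall : ∀ j, b ≤ t j := fun j => Nat.rec h0 (fun j ih => hstep j ih) j
    have : b ≤ blimsup a := by
      rw [blimsup_eq_seqInf_tails]; exact le_seqInf _ _ hall
    rw [ha] at this
    exact hb (le_bot_iff.mp this)

lemma seqW_finset_key {G : Finset α} (hG : ↑G ⊆ seqW a) :
    ∃ J : ℕ, ∀ k, J ≤ k → G.sup id ⊓ a k = ⊥ := by
  classical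
  have hJex : ∃ J : ℕ, G.sup id ≤ (tails a J)ᶜ := by
    induction G using Finset.induction_on with
    | empty => exact ⟨0, by simp⟩
    | @insert w G hw ih =>
      have hsub : ↑G ⊆ seqW a := fun x hx => hG (by simp [hx])
      obtain ⟨J, hJ⟩ := ih hsub
      have hwle : ∃ j, w ≤ (tails a j)ᶜ := by
        obtain ⟨-, hw' | ⟨j, hw'⟩⟩ := hG (by simp : w ∈ ↑(insert w G))
        · exact ⟨0, le_of_eq hw'⟩
        · exact ⟨j + 1, hw' ▸ inf_le_right⟩
      obtain ⟨j, hj⟩ := hwle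
      refine ⟨max j J, ?_⟩
      rw [Finset.sup_insert]
      exact sup_le (hj.trans (compl_le_compl (tails_antitone a (le_max_left j J))))
        (hJ.trans (compl_le_compl (tails_antitone a (le_max_right j J))))
  obtain ⟨J, hJ⟩ := hJex
  exact ⟨J, fun k hk => disj_of_le_compl hJ (le_tails a hk)⟩

end Tails

theorem uwd_of_frag (h : ∃ C : ℕ → Set α, IsFragmentation C ∧ Tight C ∧ GDelta C) :
    UniformlyWeaklyDistributive α := by
  classical
  obtain ⟨C, hfrag, htight, hgd⟩ := h
  have key : ∀ (n : ℕ) (W : Set α), IsCMA W →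
      ∃ E : Finset α, ↑E ⊆ W ∧ ((E.sup id)ᶜ ∉ C n) := by
    intro n W hW
    by_contra hcon
    push_neg at hcon
    have htop : (⊤ : α) ∈ C n := by
      have := hcon ∅ (by simp)
      simpa using this
    have htopbot : (⊤ : α) ≠ ⊥ := fun h => hfrag.not_bot n (h ▸ htop)
    obtain ⟨w₀, hw₀, -⟩ := hW.2.2 ⊤ htopbot
    obtain ⟨e, he⟩ := hW.1.exists_eq_range ⟨w₀, hw₀⟩
    set g : ℕ → α := fun k => (Finset.range (k+1)).sup e with hg
    set b : ℕ → α := fun k => (g k)ᶜ with hb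
    have hbC : ∀ k, b k ∈ C n := by
      intro k
      have hsub : ↑((Finset.range (k+1)).image e) ⊆ W := by
        intro x hx
        simp only [Finset.coe_image] at hx
        obtain ⟨i, -, rfl⟩ := hx
        rw [he]; exact Set.mem_range_self i
      have := hcon _ hsub
      rwa [Finset.sup_image, Function.id_comp] at this
    have hgmono : Monotone g := by
      intro i j hij
      exact Finset.sup_mono (Finset.range_subset_range.mpr (by omega))
    have hbtend : TendstoBot b := by
      have htails : ∀ j, (seqSup fun k => b (j + k)) = b j := by
        intro j
        apply le_antisymm
        · exact seqSup_le _ _ fun k => compl_le_compl (hgmono (Nat.le_add_right j k))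
        · simpa using le_seqSup (fun k => b (j + k)) 0
      unfold TendstoBot blimsup
      rw [show (fun j => seqSup fun k => b (j+k)) = b from funext htails]
      have hIb : seqInf b = (seqSup g)ᶜ := by
        rw [show b = fun k => (g k)ᶜ from rfl, seqInf_compl]
      show seqInf b = ⊥
      rw [hIb]
      by_contra hne
      obtain ⟨w, hwW, hwm⟩ := hW.2.2 _ hne
      rw [he] at hwW
      obtain ⟨i, rfl⟩ := hwW
      have hle : e i ≤ seqSup g :=
        (Finset.le_sup (f := e) (Finset.self_mem_range_succ i)).trans (le_seqSup g i)
      exact hwm (by rw [inf_comm]; exact disj_of_le_compl le_rfl hle)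
    exact hgd n b hbC hbtend
  choose E hEsub hEnot using key
  refine ⟨fun n W => if h : IsCMA W then E n W h else ∅, ?_, ?_⟩
  · intro n W hW
    simp only [dif_pos hW]; exact hEsub n W hW
  · intro W hW
    rw [tendstoTop_iff_compl]
    apply htight
    intro n
    simp only [dif_pos (hW n)]
    exact hEnot n (W n) (hW n)

theorem frag_of_uwd (h : UniformlyWeaklyDistributive α) :
    ∃ C : ℕ → Set α, IsFragmentation C ∧ Tight C ∧ GDelta C := by
  classical
  obtain ⟨F, hF1, hF2⟩ := h
  set s : ℕ → Set α → α := fun m W => (F m W).sup id with hs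
  set D : ℕ → Set α := fun m => {x | x ≠ ⊥ ∧ ∀ W : Set α, IsCMA W → x ⊓ s m W ≠ ⊥}
    with hD
  refine ⟨fun n => {x | ∃ m ≤ n, x ∈ D m}, ⟨?_, ?_, ?_, ?_⟩, ?_, ?_⟩
  · rintro n x ⟨m, hm, hx⟩
    exact ⟨m, hm.trans (Nat.le_succ n), hx⟩
  · rintro n ⟨m, -, hx, -⟩
    exact hx rfl
  · rintro n x y ⟨m, hm, hx0, hx⟩ hxy
    refine ⟨m, hm, fun h0 => hx0 (le_bot_iff.mp (h0 ▸ hxy)), fun W hW hmeet => hx W hW ?_⟩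
    exact le_bot_iff.mp (hmeet ▸ inf_le_inf_right _ hxy)
  · intro x hx
    by_contra hcov
    push_neg at hcov
    have hex : ∀ m : ℕ, ∃ W : Set α, IsCMA W ∧ x ⊓ s m W = ⊥ := by
      intro m
      have hnD : x ∉ D m := fun hD' => hcov m ⟨m, le_refl m, hD'⟩
      simp only [hD, Set.mem_setOf_eq, not_and, not_forall, Classical.not_imp,
        not_ne_iff] at hnD
      obtain ⟨W, hW, hm⟩ := hnD hx
      exact ⟨W, hW, hm⟩
    choose W hW hmeet using hex
    have h2 := hF2 W hW
    rw [tendstoTop_iff_compl] at h2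
    have hle : x ≤ blimsup (fun m => (s m (W m))ᶜ) :=
      le_blimsup_of_cofinal fun n => ⟨0, le_compl_of_inf_eq_bot (hmeet (n+0))⟩
    rw [h2] at hle
    exact hx (le_bot_iff.mp hle)
  · intro a ha
    have hex : ∀ n : ℕ, ∃ W : Set α, IsCMA W ∧ a n ⊓ s n W = ⊥ := by
      intro n
      by_cases h0 : a n = ⊥
      · obtain ⟨W, hW⟩ := exists_isCMA α
        exact ⟨W, hW, by rw [h0, bot_inf_eq]⟩
      · have hnD : a n ∉ D n := fun hD' => ha n ⟨n, le_refl n, hD'⟩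
        simp only [hD, Set.mem_setOf_eq, not_and, not_forall, Classical.not_imp,
          not_ne_iff] at hnD
        obtain ⟨W, hW, hm⟩ := hnD h0
        exact ⟨W, hW, hm⟩
    choose W hW hmeet using hex
    have h2 := hF2 W hW
    rw [tendstoTop_iff_compl] at h2
    exact tendstoBot_mono (fun n => le_compl_of_inf_eq_bot (hmeet n)) h2
  · intro n a haC hten
    have hsel : ∀ k : ℕ, ∃ m : Fin (n+1), a k ∈ D m.val := by
      intro k
      obtain ⟨m, hm, hmem⟩ := haC k
      exact ⟨⟨m, Nat.lt_succ_of_le hm⟩, hmem⟩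
    choose f hf using hsel
    obtain ⟨m₀, hm₀⟩ := Finite.exists_infinite_fiber f
    have hinf : (f ⁻¹' {m₀}).Infinite := Set.infinite_coe_iff.mp hm₀
    have hWcma := seqW_isCMA a hten
    obtain ⟨J, hJ⟩ := seqW_finset_key a (hF1 m₀.val (seqW a) hWcma)
    obtain ⟨k, hk1, hk2⟩ : ∃ k ∈ f ⁻¹' {m₀}, J ≤ k := by
      by_contra hcon
      push_neg at hcon
      exact hinf (Set.Finite.subset (Set.finite_Iio J) fun k hk =>
        Set.mem_Iio.mpr (hcon k hk))
    have hk1' : f k = m₀ := hk1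
    have hmem := hf k
    rw [hk1'] at hmem
    exact hmem.2 (seqW a) hWcma (by rw [inf_comm]; exact hJ k hk2)


end BooleanSigmaAlgebra

open BooleanSigmaAlgebra

/-- A Boolean σ-algebra is uniformly weakly distributive if and only if it has
a tight `G_δ` fragmentation. -/
theorem uniformlyWeaklyDistributive_iff_tight_gdelta_fragmentation
    (α : Type u) [BooleanSigmaAlgebra α] :
    UniformlyWeaklyDistributive α ↔
      ∃ C : ℕ → Set α, IsFragmentation C ∧ Tight C ∧ GDelta C :=
  ⟨frag_of_uwd, uwd_of_frag⟩
end

section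
/- If {C_n} is a tight G_δ fragmentation of a Boolean σ-algebra B, then for every n there exists k > n such that for every c ∈ C_n, if c = a ∪ b then either a ∈ C_k or b ∈ C_k. Consequently, if B has a tight G_δ fragmentation, then B has a tight G_δ fragmentation that is also graded. -/
universe u

open BooleanSigmaAlgebra

section Aux

variable {α : Type u} [BooleanSigmaAlgebra α]

lemma my_seqInf_le (f : ℕ → α) (n : ℕ) : seqInf f ≤ f n := by
  rw [seqInf, ← compl_compl (f n)]
  exact compl_le_compl (le_seqSup (fun n => (f n)ᶜ) n)

lemma my_le_seqInf (f : ℕ → α) (b : α) (h : ∀ n, b ≤ f n) : b ≤ seqInf f := by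
  rw [seqInf, ← compl_compl b]
  exact compl_le_compl (seqSup_le _ _ fun n => compl_le_compl (h n))

lemma my_inf_seqSup_le (a : α) (f : ℕ → α) :
    a ⊓ seqSup f ≤ seqSup fun n => a ⊓ f n := by
  have h1 : seqSup f ≤ (seqSup fun n => a ⊓ f n) ⊔ aᶜ := by
    refine seqSup_le _ _ fun n => ?_
    calc f n = (f n ⊓ a) ⊔ (f n ⊓ aᶜ) := by
          rw [← inf_sup_left, sup_compl_eq_top, inf_top_eq]
    _ ≤ (seqSup fun n => a ⊓ f n) ⊔ aᶜ :=
          sup_le_sup (by rw [inf_comm]; exact le_seqSup (fun n => a ⊓ f n) n) inf_le_right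
  calc a ⊓ seqSup f ≤ a ⊓ ((seqSup fun n => a ⊓ f n) ⊔ aᶜ) := inf_le_inf_left _ h1
  _ = a ⊓ seqSup fun n => a ⊓ f n := by rw [inf_sup_left, inf_compl_eq_bot, sup_bot_eq]
  _ ≤ _ := inf_le_right

lemma my_seqSup_inf_seqSup_le (u v : ℕ → α) (hu : Monotone u) (hv : Monotone v) :
    seqSup u ⊓ seqSup v ≤ seqSup fun n => u n ⊓ v n := by
  refine le_trans (my_inf_seqSup_le (seqSup u) v) (seqSup_le _ _ fun m => ?_)
  rw [inf_comm]
  refine le_trans (my_inf_seqSup_le (v m) u) (seqSup_le _ _ fun n => ?_)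
  refine le_trans ?_ (le_seqSup (fun n => u n ⊓ v n) (max n m))
  exact le_inf (inf_le_right.trans (hu (le_max_left n m)))
    (inf_le_left.trans (hv (le_max_right n m)))

lemma my_seqSup_shift_antitone (a : ℕ → α) :
    Antitone fun n => seqSup fun k => a (n + k) := by
  intro m n hmn
  refine seqSup_le _ _ fun k => ?_
  have h : n + k = m + (n - m + k) := by omega
  rw [h]
  exact le_seqSup (fun k => a (m + k)) (n - m + k)

lemma my_tendstoBot_sup {a b : ℕ → α} (ha : TendstoBot a) (hb : TendstoBot b) :
    TendstoBot fun n => a n ⊔ b n := by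
  have h1 : blimsup (fun n => a n ⊔ b n) ≤ blimsup a ⊔ blimsup b := by
    have h2 : blimsup (fun n => a n ⊔ b n) ≤
        seqInf fun n => (seqSup fun k => a (n + k)) ⊔ (seqSup fun k => b (n + k)) := by
      refine my_le_seqInf _ _ fun n => ?_
      refine (my_seqInf_le _ n).trans (seqSup_le _ _ fun k => ?_)
      exact sup_le_sup (le_seqSup (fun k => a (n + k)) k) (le_seqSup (fun k => b (n + k)) k)
    refine h2.trans ?_
    have hu : Monotone fun n => (seqSup fun k => a (n + k))ᶜ :=
      fun m n h => compl_le_compl (my_seqSup_shift_antitone a h)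
    have hv : Monotone fun n => (seqSup fun k => b (n + k))ᶜ :=
      fun m n h => compl_le_compl (my_seqSup_shift_antitone b h)
    have key := my_seqSup_inf_seqSup_le _ _ hu hv
    show (seqSup fun n => ((seqSup fun k => a (n + k)) ⊔ (seqSup fun k => b (n + k)))ᶜ)ᶜ ≤
      (seqSup fun n => (seqSup fun k => a (n + k))ᶜ)ᶜ ⊔
        (seqSup fun n => (seqSup fun k => b (n + k))ᶜ)ᶜ
    calc (seqSup fun n => ((seqSup fun k => a (n + k)) ⊔ (seqSup fun k => b (n + k)))ᶜ)ᶜ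
        = (seqSup fun n => (seqSup fun k => a (n + k))ᶜ ⊓ (seqSup fun k => b (n + k))ᶜ)ᶜ := by
          simp only [compl_sup]
      _ ≤ ((seqSup fun n => (seqSup fun k => a (n + k))ᶜ) ⊓
            (seqSup fun n => (seqSup fun k => b (n + k))ᶜ))ᶜ := compl_le_compl key
      _ = _ := by rw [compl_inf]
  rw [TendstoBot] at *
  rw [ha, hb, sup_idem] at h1
  exact le_bot_iff.mp h1

lemma my_frag_mono {C : ℕ → Set α} (hC : IsFragmentation C) :
    ∀ {m n : ℕ}, m ≤ n → C m ⊆ C n := by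
  intro m n h
  induction h with
  | refl => exact fun _ h => h
  | step _ ih => exact ih.trans (hC.mono _)

end Aux

/-- If `{C_n}` is a tight `G_δ` fragmentation of `B` then for every `n` there
is a `k > n` such that whenever `c ∈ C_n` and `c = a ⊔ b`, either `a ∈ C_k` or
`b ∈ C_k`. Consequently, if `B` has a tight `G_δ` fragmentation then `B` has
one that is also graded. -/
theorem tight_gdelta_fragmentation_graded
    (α : Type u) [BooleanSigmaAlgebra α]
    (C : ℕ → Set α) (hC : IsFragmentation C) (ht : Tight C) (hg : GDelta C) :
    (∀ n : ℕ, ∃ k : ℕ, n < k ∧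
      ∀ c ∈ C n, ∀ a b : α, c = a ⊔ b → a ∈ C k ∨ b ∈ C k) ∧
    (∃ C' : ℕ → Set α, IsFragmentation C' ∧ Tight C' ∧ GDelta C' ∧ Graded C') := by
  have mono : ∀ {m n : ℕ}, m ≤ n → C m ⊆ C n := fun {m n} h => my_frag_mono hC h
  have part1 : ∀ n : ℕ, ∃ k : ℕ, n < k ∧
      ∀ c ∈ C n, ∀ a b : α, c = a ⊔ b → a ∈ C k ∨ b ∈ C k := by
    intro n
    by_contra hcon
    push_neg at hcon
    have h' : ∀ m : ℕ, ∃ c ∈ C n, ∃ a b : α,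
        c = a ⊔ b ∧ a ∉ C (max m (n + 1)) ∧ b ∉ C (max m (n + 1)) := by
      intro m
      obtain ⟨c, hc, a, b, hab, h1, h2⟩ :=
        hcon (max m (n + 1)) (lt_of_lt_of_le (Nat.lt_succ_self n) (le_max_right _ _))
      exact ⟨c, hc, a, b, hab, h1, h2⟩
    choose c hc a b hab hna hnb using h'
    have hna' : ∀ m, a m ∉ C m := fun m h => hna m (mono (le_max_left _ _) h)
    have hnb' : ∀ m, b m ∉ C m := fun m h => hnb m (mono (le_max_left _ _) h)
    have hta := ht a hna'
    have htb := ht b hnb'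
    have htc : TendstoBot c := by
      have : c = fun m => a m ⊔ b m := funext fun m => hab m
      rw [this]
      exact my_tendstoBot_sup hta htb
    exact hg n c hc htc
  refine ⟨part1, ?_⟩
  choose g hgk hgsplit using part1
  set f : ℕ → ℕ := fun n => Nat.rec 0 (fun _ ih => g ih) n with hf
  have hfsucc : ∀ n, f (n + 1) = g (f n) := fun n => rfl
  have hfmono : ∀ n, f n < f (n + 1) := fun n => by rw [hfsucc]; exact hgk (f n)
  have hfle : ∀ n, n ≤ f n := by
    intro n
    induction n with
    | zero => exact Nat.zero_le _
    | succ n ih => exact Nat.succ_le_of_lt (lt_of_le_of_lt ih (hfmono n))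
  refine ⟨fun n => C (f n), ?_, ?_, ?_, ?_⟩
  · exact {
      mono := fun n => mono (le_of_lt (hfmono n))
      not_bot := fun n => hC.not_bot (f n)
      upward := fun n => hC.upward (f n)
      covers := fun x hx => by
        obtain ⟨n, hn⟩ := hC.covers x hx
        exact ⟨n, mono (hfle n) hn⟩ }
  · intro x hx
    exact ht x fun n h => hx n (mono (hfle n) h)
  · intro n x hx
    exact hg (f n) x hx
  · intro n x y hxy
    show x ∈ C (f (n + 1)) ∨ y ∈ C (f (n + 1))
    rw [hfsucc]
    exact hgsplit (f n) (x ⊔ y) hxy x y rfl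
end
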